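/- The three linear maps S, T, U of ℤ^6 (defined below) generate a finite subgroup of GL(6, ℤ) of order 12, isomorphic to S2 × S3. -/
import Mathlib


/- On `ℤ^6` with coordinates `(λ1, λ2, μ1, μ2, ν1, ν2)` and
`ν3 = λ1 + λ2 + μ1 + μ2 − ν1 − ν2`, the matrices of the linear maps
`S(λ1, λ2, μ1, μ2, ν1, ν2) = (μ1, μ2, λ1, λ2, ν1, ν2)`,
`U(λ1, λ2, μ1, μ2, ν1, ν2) = (ν1 − ν3, ν1 − ν2, μ1, μ2, ν1, ν1 − λ2)`,
`T(λ1, λ2, μ1, μ2, ν1, ν2) = (λ1, λ1 − λ2, μ1, μ1 − μ2, λ1 + μ1 − ν3, λ1 + μ1 − ν2)`. -/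

def SMat : Matrix (Fin 6) (Fin 6) ℤ :=
  !![0,0,1,0,0,0; 0,0,0,1,0,0; 1,0,0,0,0,0; 0,1,0,0,0,0; 0,0,0,0,1,0; 0,0,0,0,0,1]

def UMat : Matrix (Fin 6) (Fin 6) ℤ :=
  !![-1,-1,-1,-1,2,1; 0,0,0,0,1,-1; 0,0,1,0,0,0; 0,0,0,1,0,0; 0,0,0,0,1,0; 0,-1,0,0,1,0]

def TMat : Matrix (Fin 6) (Fin 6) ℤ :=
  !![1,0,0,0,0,0; 1,-1,0,0,0,0; 0,0,1,0,0,0; 0,0,1,-1,0,0; 0,-1,0,-1,1,1; 1,0,1,0,0,-1]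

/-- `S`, `T`, `U` as elements of `GL(6, ℤ)` (each is an involution). -/
def Sgl : GL (Fin 6) ℤ := ⟨SMat, SMat, by decide, by decide⟩
def Ugl : GL (Fin 6) ℤ := ⟨UMat, UMat, by decide, by decide⟩
def Tgl : GL (Fin 6) ℤ := ⟨TMat, TMat, by decide, by decide⟩


def hfun : Equiv.Perm (Fin 3) → GL (Fin 6) ℤ := fun σ =>
  if σ = 1 then 1
  else if σ = Equiv.swap 0 1 then Sgl
  else if σ = Equiv.swap 1 2 then Ugl
  else if σ = Equiv.swap 0 2 then Sgl * Ugl * Sgl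
  else if σ = Equiv.swap 0 1 * Equiv.swap 1 2 then Sgl * Ugl
  else Ugl * Sgl

def ffun : Equiv.Perm (Fin 2) × Equiv.Perm (Fin 3) → GL (Fin 6) ℤ := fun p =>
  (if p.1 = 1 then 1 else Tgl) * hfun p.2

set_option maxHeartbeats 4000000 in
theorem ffun_mul : ∀ a b, ffun (a * b) = ffun a * ffun b := by decide

set_option maxHeartbeats 4000000 in
theorem ffun_inj : ∀ a b, ffun a = ffun b → a = b := by decide

def φSTU : Equiv.Perm (Fin 2) × Equiv.Perm (Fin 3) →* GL (Fin 6) ℤ :=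
  MonoidHom.mk' ffun ffun_mul

set_option maxHeartbeats 4000000 in
theorem range_eq :
    φSTU.range = (Subgroup.closure {Sgl, Tgl, Ugl} : Subgroup (GL (Fin 6) ℤ)) := by
  apply le_antisymm
  · have hS : Sgl ∈ Subgroup.closure {Sgl, Tgl, Ugl} :=
      Subgroup.subset_closure (by simp)
    have hT : Tgl ∈ Subgroup.closure {Sgl, Tgl, Ugl} :=
      Subgroup.subset_closure (by simp)
    have hU : Ugl ∈ Subgroup.closure {Sgl, Tgl, Ugl} :=
      Subgroup.subset_closure (by simp)
    rintro x ⟨p, rfl⟩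
    show ffun p ∈ _
    unfold ffun
    refine mul_mem ?_ ?_
    · split_ifs
      · exact one_mem _
      · exact hT
    · unfold hfun
      split_ifs
      · exact one_mem _
      · exact hS
      · exact hU
      · exact mul_mem (mul_mem hS hU) hS
      · exact mul_mem hS hU
      · exact mul_mem hU hS
  · rw [Subgroup.closure_le]
    rintro x (rfl | rfl | rfl)
    · exact ⟨(1, Equiv.swap 0 1), by decide⟩
    · exact ⟨(Equiv.swap 0 1, 1), by decide⟩
    · exact ⟨(1, Equiv.swap 1 2), by decide⟩

theorem STU_group_order_twelve :
    Nat.card (Subgroup.closure {Sgl, Tgl, Ugl} : Subgroup (GL (Fin 6) ℤ)) = 12 ∧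
    Nonempty ((Subgroup.closure {Sgl, Tgl, Ugl} : Subgroup (GL (Fin 6) ℤ)) ≃*
      Equiv.Perm (Fin 2) × Equiv.Perm (Fin 3)) := by
  have hinj : Function.Injective ⇑φSTU := fun a b h => ffun_inj a b h
  have e : (Subgroup.closure {Sgl, Tgl, Ugl} : Subgroup (GL (Fin 6) ℤ)) ≃*
      Equiv.Perm (Fin 2) × Equiv.Perm (Fin 3) :=
    (MulEquiv.subgroupCongr range_eq.symm).trans (MonoidHom.ofInjective hinj).symm
  constructor
  · rw [Nat.card_congr e.toEquiv]
    simp [Nat.card_eq_fintype_card, Fintype.card_perm]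
    rfl
  · exact ⟨e⟩
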